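/- arXiv:2510.11871 — 2 statements merged into one kernel-verified Lean document; each statement's English description precedes it below -/
import Mathlib

section
/- Suppose C = E[∇f(U) ⊗ ∇f(U)] with E‖∇f(U)‖² < ∞, the law of U has full support on H (or the gradient condition holds everywhere), and the trailing eigenvalues satisfy λ_{n+1} = λ_{n+2} = ⋯ = 0, where A_n = span{w₁,…,w_n} is the span of the leading n eigenfunctions. If ∇f(u) ∈ A_n for all u ∈ H, then for any u₁, u₂ ∈ H with P_{A_n} u₁ = P_{A_n} u₂ we have f(u₁) = f(u₂), where P_{A_n} is the orthogonal projector onto A_n. -/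
/-!
The difference `u₁ - u₂` lies in `Aᗮ`, and along `Aᗮ` the derivative `v ↦ ⟪∇f u, v⟫` of `f`
vanishes identically because `∇f u ∈ A`. Hence `w ↦ f (u₂ + w)` is a differentiable function on
the (convex) space `Aᗮ` with zero derivative, so it is constant.
-/

open RealInnerProductSpace

theorem apply_add_eq_of_fderiv_apply_eq_zero_of_mem {𝕜 E F : Type*} [RCLike 𝕜]
    [NormedAddCommGroup E] [NormedSpace 𝕜 E] [NormedAddCommGroup F] [NormedSpace 𝕜 F]
    {f : E → F} (hf : Differentiable 𝕜 f) (K : Submodule 𝕜 E)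
    (hK : ∀ x, ∀ v ∈ K, fderiv 𝕜 f x v = 0) (x : E) {v : E} (hv : v ∈ K) :
    f (x + v) = f x := by
  have hφ : Differentiable 𝕜 fun w : K ↦ f (x + w) :=
    hf.comp ((differentiable_const x).add K.subtypeL.differentiable)
  have hφ' (w : K) : fderiv 𝕜 (fun w : K ↦ f (x + w)) w = 0 := by
    have hderiv : HasFDerivAt (fun w : K ↦ f (x + w)) ((fderiv 𝕜 f (x + w)).comp K.subtypeL) w :=
      (hf _).hasFDerivAt.comp w (K.subtypeL.hasFDerivAt.const_add x)
    ext u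
    rw [hderiv.fderiv]
    exact hK _ u u.2
  simpa using is_const_of_fderiv_eq_zero hφ hφ' ⟨v, hv⟩ 0

theorem fderiv_apply_eq_zero_of_gradient_mem {H : Type*} [NormedAddCommGroup H]
    [InnerProductSpace ℝ H] [CompleteSpace H] {f : H → ℝ} {A : Submodule ℝ H}
    (hgrad : ∀ u, gradient f u ∈ A) (u : H) {v : H} (hv : v ∈ Aᗮ) :
    fderiv ℝ f u v = 0 := by
  rw [← inner_gradient_left]
  exact Submodule.inner_right_of_mem_orthogonal (hgrad u) hv

theorem sub_mem_orthogonal_of_orthogonalProjectionOnto_eq {E : Type*} [NormedAddCommGroup E]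
    [InnerProductSpace ℝ E] {K : Submodule ℝ E} [K.HasOrthogonalProjection] {u₁ u₂ : E}
    (h : K.orthogonalProjectionOnto u₁ = K.orthogonalProjectionOnto u₂) : u₁ - u₂ ∈ Kᗮ := by
  rw [← Submodule.orthogonalProjectionOnto_eq_zero_iff, map_sub, h, sub_self]

theorem stmt4_general {H : Type*} [NormedAddCommGroup H] [InnerProductSpace ℝ H]
    [CompleteSpace H]
    (f : H → ℝ) (hf : ContDiff ℝ 1 f)
    (A : Submodule ℝ H) [FiniteDimensional ℝ A]
    (hgrad : ∀ u : H, gradient f u ∈ A)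
    (u₁ u₂ : H) (hP : A.orthogonalProjection u₁ = A.orthogonalProjection u₂) :
    f u₁ = f u₂ := by
  have hconst := apply_add_eq_of_fderiv_apply_eq_zero_of_mem (hf.differentiable one_ne_zero) Aᗮ
    (fun u _ hv ↦ fderiv_apply_eq_zero_of_gradient_mem hgrad u hv) u₂
    (sub_mem_orthogonal_of_orthogonalProjectionOnto_eq hP)
  rwa [add_sub_cancel] at hconst

/-- Level-set invariance: if the gradient of `f` always lies in the
(finite-dimensional) active subspace `A`, then `f` is constant on fibers of the
orthogonal projection onto `A`. -/
theorem stmt4 {H : Type*} [NormedAddCommGroup H] [InnerProductSpace ℝ H]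
    [CompleteSpace H] [TopologicalSpace.SeparableSpace H]
    (f : H → ℝ) (hf : ContDiff ℝ 1 f)
    (A : Submodule ℝ H) [FiniteDimensional ℝ A]
    (hgrad : ∀ u : H, gradient f u ∈ A)
    (u₁ u₂ : H) (hP : A.orthogonalProjection u₁ = A.orthogonalProjection u₂) :
    f u₁ = f u₂ :=
  stmt4_general f hf A hgrad u₁ u₂ hP
end

section
/- Let U be an H-valued random variable, A_n a closed subspace with orthogonal projector P, Y = P U, Z = (I − P) U, and F(y) = E[f(U) | Y = y] the conditional-expectation surrogate. If a Poincaré-type inequality holds for the conditional law of Z given Y, i.e., E[(f(U) − F(Y))² | Y] ≤ C⋆ E[‖(I−P)∇f(U)‖² | Y] almost surely, then E[(f(U) − F(Y))²] ≤ C⋆ E‖(I−P)∇f(U)‖² = C⋆ Σ_{i>n} λ_i, where λ_i are the eigenvalues of C = E[∇f(U) ⊗ ∇f(U)] associated with eigenfunctions spanning A_n and its complement. -/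
open RealInnerProductSpace MeasureTheory

/-- The rank-one operator `(a ⊗ b) h = ⟨h, b⟩ a`. -/
noncomputable def rankOne {H : Type*} [NormedAddCommGroup H] [InnerProductSpace ℝ H]
    (a b : H) : H →L[ℝ] H :=
  (innerSL ℝ b).smulRight a

/-- MSE bound for the active-subspace surrogate: with `P` the orthogonal
projector onto the span of the leading `n` eigenfunctions, `Y = P U` and
`F(Y) = E[f(U) | Y]`, a conditional Poincaré inequality yields
`E(f(U) − F(Y))² ≤ C⋆ E‖(I−P)∇f(U)‖² = C⋆ Σ_{i>n} λ_i`. -/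
theorem stmt8 {H : Type*} [NormedAddCommGroup H] [InnerProductSpace ℝ H]
    [CompleteSpace H] [TopologicalSpace.SeparableSpace H]
    [MeasurableSpace H] [BorelSpace H]
    {Ω : Type*} [m0 : MeasurableSpace Ω] (P : Measure Ω) [IsProbabilityMeasure P]
    (U : Ω → H) (hU : Measurable U) (f : H → ℝ) (hf : Differentiable ℝ f)
    (hmom : Integrable (fun ω => ‖gradient f (U ω)‖ ^ 2) P)
    (hint : Integrable (fun ω => rankOne (gradient f (U ω)) (gradient f (U ω))) P)
    (hfint : Integrable (fun ω => (f (U ω)) ^ 2) P)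
    (C : H →L[ℝ] H)
    (hC : C = ∫ ω, rankOne (gradient f (U ω)) (gradient f (U ω)) ∂P)
    (e : HilbertBasis ℕ ℝ H) (lam : ℕ → ℝ)
    (heig : ∀ i, C (e i) = lam i • e i)
    (n : ℕ)
    -- `Pn` is the orthogonal projector onto `A_n = span{w₁,…,w_n}`
    (Pn : H →L[ℝ] H) (hPn : Pn = ∑ i ∈ Finset.range n, rankOne (e i) (e i))
    -- the σ-algebra generated by `Y = P_{A_n} U`
    (m : MeasurableSpace Ω) (hm : m = MeasurableSpace.comap (fun ω => Pn (U ω)) inferInstance)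
    (Cstar : ℝ) (hCstar : 0 ≤ Cstar)
    -- conditional Poincaré inequality for the conditional law of `Z` given `Y`
    (hPoincare : ∀ᵐ ω ∂P,
      (P[fun ω' => (f (U ω') - (P[fun ω'' => f (U ω'')|m]) ω') ^ 2|m]) ω ≤
        Cstar * (P[fun ω' => ‖gradient f (U ω') - Pn (gradient f (U ω'))‖ ^ 2|m]) ω) :
    (∫ ω, (f (U ω) - (P[fun ω' => f (U ω')|m]) ω) ^ 2 ∂P ≤
      Cstar * ∫ ω, ‖gradient f (U ω) - Pn (gradient f (U ω))‖ ^ 2 ∂P) ∧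
    (∫ ω, ‖gradient f (U ω) - Pn (gradient f (U ω))‖ ^ 2 ∂P =
      ∑' i : ℕ, if n ≤ i then lam i else 0) := by
  letI : MeasurableSpace Ω := m0
  -- measurability of the gradient
  have hgradm : Measurable fun x : H => gradient f x := by
    borelize (H →L[ℝ] ℝ)
    exact (InnerProductSpace.toDual ℝ H).symm.continuous.measurable.comp (measurable_fderiv ℝ f)
  have hgm : Measurable fun ω => gradient f (U ω) := hgradm.comp hU
  have hm_le : m ≤ m0 := hm ▸ (Pn.continuous.measurable.comp hU).comap_le
  haveI : SigmaFinite (P.trim hm_le) := inferInstance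
  -- integrability of ‖(I - Pn)∇f(U)‖²
  have hgPn_meas : Measurable fun ω => gradient f (U ω) - Pn (gradient f (U ω)) :=
    hgm.sub (Pn.continuous.measurable.comp hgm)
  have h2int : Integrable (fun ω => ‖gradient f (U ω) - Pn (gradient f (U ω))‖ ^ 2) P := by
    refine (hmom.const_mul ((1 + ‖Pn‖) ^ 2)).mono'
      (hgPn_meas.norm.pow_const 2).aestronglyMeasurable ?_
    filter_upwards with ω
    have h1 : ‖gradient f (U ω) - Pn (gradient f (U ω))‖
        ≤ (1 + ‖Pn‖) * ‖gradient f (U ω)‖ := by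
      calc ‖gradient f (U ω) - Pn (gradient f (U ω))‖
          ≤ ‖gradient f (U ω)‖ + ‖Pn (gradient f (U ω))‖ := norm_sub_le _ _
        _ ≤ ‖gradient f (U ω)‖ + ‖Pn‖ * ‖gradient f (U ω)‖ := by
            gcongr; exact Pn.le_opNorm _
        _ = (1 + ‖Pn‖) * ‖gradient f (U ω)‖ := by ring
    rw [Real.norm_eq_abs, abs_of_nonneg (by positivity)]
    calc ‖gradient f (U ω) - Pn (gradient f (U ω))‖ ^ 2
        ≤ ((1 + ‖Pn‖) * ‖gradient f (U ω)‖) ^ 2 :=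
          pow_le_pow_left₀ (norm_nonneg _) h1 2
      _ = (1 + ‖Pn‖) ^ 2 * ‖gradient f (U ω)‖ ^ 2 := mul_pow _ _ 2
  -- orthonormality facts
  have hon : ∀ i j : ℕ, ⟪e i, e j⟫ = if i = j then (1 : ℝ) else 0 :=
    orthonormal_iff_ite.mp e.orthonormal
  -- coefficients of x - Pn x
  have hcoef : ∀ (i : ℕ) (x : H), ⟪e i, x - Pn x⟫ = if n ≤ i then ⟪e i, x⟫ else 0 := by
    intro i x
    have hPx : ⟪e i, Pn x⟫ = if i < n then ⟪e i, x⟫ else 0 := by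
      rw [hPn]
      have hr : ∀ j : ℕ, (rankOne (e j) (e j)) x = ⟪e j, x⟫ • e j := fun j => rfl
      simp only [ContinuousLinearMap.sum_apply, inner_sum, hr, real_inner_smul_right, hon,
        mul_ite, mul_one, mul_zero]
      rw [Finset.sum_ite_eq (Finset.range n) i (fun j => ⟪e j, x⟫)]
      simp [Finset.mem_range]
    rw [inner_sub_right, hPx]
    by_cases hi : n ≤ i
    · rw [if_neg (not_lt.mpr hi), if_pos hi, sub_zero]
    · rw [if_pos (lt_of_not_ge hi), if_neg hi, sub_self]
  -- pointwise Parseval identity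
  have hsum_pt : ∀ x : H, Summable fun i => ⟪e i, x⟫ ^ 2 :=
    fun x => (e.summable_inner_mul_inner x x).congr fun i => by
      rw [real_inner_comm x (e i), ← pow_two]
  have htsum_pt : ∀ x : H, ∑' i, ⟪e i, x⟫ ^ 2 = ‖x‖ ^ 2 := by
    intro x
    have h := e.tsum_inner_mul_inner x x
    rw [real_inner_self_eq_norm_sq] at h
    rw [← h]
    exact tsum_congr fun i => by rw [real_inner_comm x (e i), ← pow_two]
  have hnorm_pt : ∀ x : H,
      ‖x - Pn x‖ ^ 2 = ∑' i, (if n ≤ i then ⟪e i, x⟫ ^ 2 else 0) := by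
    intro x
    rw [← htsum_pt (x - Pn x)]
    exact tsum_congr fun i => by
      rw [hcoef i x]; split_ifs <;> simp
  -- nonnegativity helper
  have hFnn : ∀ (i : ℕ) (ω : Ω),
      0 ≤ (if n ≤ i then ⟪e i, gradient f (U ω)⟫ ^ 2 else 0) := by
    intro i ω; by_cases hi : n ≤ i <;> simp [hi, sq_nonneg]
  -- the eigenvalues as integrals
  have hlam : ∀ i : ℕ, lam i = ∫ ω, ⟪e i, gradient f (U ω)⟫ ^ 2 ∂P := by
    intro i
    have h2 : Integrable
        (fun ω => (rankOne (gradient f (U ω)) (gradient f (U ω))) (e i)) P :=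
      (ContinuousLinearMap.apply ℝ H (e i)).integrable_comp hint
    have h3 : ⟪e i, C (e i)⟫
        = ∫ ω, ⟪e i, (rankOne (gradient f (U ω)) (gradient f (U ω))) (e i)⟫ ∂P := by
      rw [hC, ContinuousLinearMap.integral_apply hint, integral_inner h2 (e i)]
    have h4 : ⟪e i, C (e i)⟫ = lam i := by
      rw [heig i, real_inner_smul_right, real_inner_self_eq_norm_sq, e.orthonormal.1 i]
      simp
    rw [← h4, h3]
    refine integral_congr_ae (Filter.Eventually.of_forall fun ω => ?_)
    show ⟪e i, ⟪gradient f (U ω), e i⟫ • gradient f (U ω)⟫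
        = ⟪e i, gradient f (U ω)⟫ ^ 2
    rw [real_inner_smul_right, real_inner_comm (gradient f (U ω)) (e i), ← pow_two]
  -- integrability of the coefficient squares
  have hFint : ∀ i : ℕ, Integrable (fun ω => ⟪e i, gradient f (U ω)⟫ ^ 2) P := by
    intro i
    have hmeasi : Measurable fun ω => (⟪e i, gradient f (U ω)⟫ : ℝ) :=
      (continuous_const.inner continuous_id).measurable.comp hgm
    refine hmom.mono' (hmeasi.pow_const 2).aestronglyMeasurable ?_
    filter_upwards with ω
    rw [Real.norm_eq_abs, abs_of_nonneg (sq_nonneg _)]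
    have h := abs_real_inner_le_norm (e i) (gradient f (U ω))
    rw [e.orthonormal.1 i, one_mul] at h
    calc ⟪e i, gradient f (U ω)⟫ ^ 2 = |⟪e i, gradient f (U ω)⟫| ^ 2 := (sq_abs _).symm
      _ ≤ ‖gradient f (U ω)‖ ^ 2 := pow_le_pow_left₀ (abs_nonneg _) h 2
  have hFint' : ∀ i : ℕ,
      Integrable (fun ω => if n ≤ i then ⟪e i, gradient f (U ω)⟫ ^ 2 else 0) P := by
    intro i
    by_cases hi : n ≤ i
    · simpa only [if_pos hi] using hFint i
    · simp only [if_neg hi]; exact integrable_zero _ _ _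
  -- summability of the integrals
  have hS : Summable
      (fun i => ∫ ω, (if n ≤ i then ⟪e i, gradient f (U ω)⟫ ^ 2 else 0) ∂P) := by
    refine summable_of_sum_le (c := ∫ ω, ‖gradient f (U ω)‖ ^ 2 ∂P)
      (fun i => integral_nonneg (hFnn i)) ?_
    intro u
    rw [← integral_finset_sum u (fun i _ => hFint' i)]
    refine integral_mono (integrable_finset_sum u fun i _ => hFint' i) hmom fun ω => ?_
    calc ∑ i ∈ u, (if n ≤ i then ⟪e i, gradient f (U ω)⟫ ^ 2 else 0)
        ≤ ∑ i ∈ u, ⟪e i, gradient f (U ω)⟫ ^ 2 :=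
          Finset.sum_le_sum fun i _ => by split_ifs; exacts [le_rfl, sq_nonneg _]
      _ ≤ ∑' i, ⟪e i, gradient f (U ω)⟫ ^ 2 :=
          Summable.sum_le_tsum u (fun i _ => sq_nonneg _) (hsum_pt _)
      _ = ‖gradient f (U ω)‖ ^ 2 := htsum_pt _
  have hSnorm : Summable
      (fun i => ∫ ω, ‖(if n ≤ i then ⟪e i, gradient f (U ω)⟫ ^ 2 else 0)‖ ∂P) := by
    refine hS.congr fun i =>
      integral_congr_ae (Filter.Eventually.of_forall fun ω => ?_)
    exact (Real.norm_of_nonneg (hFnn i ω)).symm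
  have hswap := integral_tsum_of_summable_integral_norm hFint' hSnorm
  constructor
  · calc ∫ ω, (f (U ω) - (P[fun ω' => f (U ω')|m]) ω) ^ 2 ∂P
        = ∫ ω, (P[fun ω' => (f (U ω') - (P[fun ω'' => f (U ω'')|m]) ω') ^ 2|m]) ω ∂P :=
          (integral_condExp hm_le).symm
      _ ≤ ∫ ω, Cstar *
            (P[fun ω' => ‖gradient f (U ω') - Pn (gradient f (U ω'))‖ ^ 2|m]) ω ∂P :=
          integral_mono_ae integrable_condExp (integrable_condExp.const_mul _) hPoincare
      _ = Cstar * ∫ ω,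
            (P[fun ω' => ‖gradient f (U ω') - Pn (gradient f (U ω'))‖ ^ 2|m]) ω ∂P :=
          integral_const_mul _ _
      _ = Cstar * ∫ ω, ‖gradient f (U ω) - Pn (gradient f (U ω))‖ ^ 2 ∂P := by
          rw [integral_condExp hm_le]
  · calc ∫ ω, ‖gradient f (U ω) - Pn (gradient f (U ω))‖ ^ 2 ∂P
        = ∫ ω, ∑' i, (if n ≤ i then ⟪e i, gradient f (U ω)⟫ ^ 2 else 0) ∂P :=
          integral_congr_ae (Filter.Eventually.of_forall fun ω => hnorm_pt _)
      _ = ∑' i, ∫ ω, (if n ≤ i then ⟪e i, gradient f (U ω)⟫ ^ 2 else 0) ∂P := hswap.symm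
      _ = ∑' i : ℕ, if n ≤ i then lam i else 0 := by
          refine tsum_congr fun i => ?_
          by_cases hi : n ≤ i
          · simp only [if_pos hi]; exact (hlam i).symm
          · simp only [if_neg hi, integral_zero]
end
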